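/- Let f : ℝ^d → ℝ be twice continuously differentiable with L1-Lipschitz gradient and L2-Lipschitz Hessian, let ε₂ ∈ (0,1), and let x₀ satisfy f(x₀) − inf f ≤ Δ < ∞. Suppose x₁ = x₀ and (v_j) are unit vectors such that for every j: (i) λ_min(∇²f(x_j)) ≥ v_jᵀ∇²f(x_j)v_j − max(ε₂, ‖∇f(x_j)‖)/2 and v_jᵀ∇²f(x_j)v_j ≤ 0; (ii) x_{j+1} = x_j − (2·|v_jᵀ∇²f(x_j)v_j|/L2)·sign(v_jᵀ∇f(x_j))·v_j if 2·|v_jᵀ∇²f(x_j)v_j|³/(3·L2²) > ‖∇f(x_j)‖²/(2·L1), and x_{j+1} = x_j − (1/L1)·∇f(x_j) otherwise. Then the first index j* with v_{j*}ᵀ∇²f(x_{j*})v_{j*} > −ε₂/2 and ‖∇f(x_{j*})‖ ≤ ε₂^{3/2} satisfies j* ≤ 1 + (max(12·L2², 2·L1)/ε₂³)·(f(x₁) − f(x_{j*})) ≤ 1 + (max(12·L2², 2·L1)/ε₂³)·Δ, and at termination λ_min(∇²f(x_{j*})) ≥ −ε₂. -/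

import Mathlib

/-!
Write `λ = vᵀ∇²f(x)v`. The cubic Taylor bound (Lipschitz Hessian) shows that the
negative-curvature step decreases `f` by `2|λ|³/(3L₂²)`, the quadratic one (Lipschitz gradient)
that the gradient step decreases it by `‖∇f(x)‖²/(2L₁)`, and the update takes the step with the
larger guarantee. While the stopping test fails, `λ ≤ -ε₂/2` or `‖∇f(x)‖ > ε₂^{3/2}`, so every
iteration decreases `f` by at least `ε₂³ / max(12L₂², 2L₁)`; as the total decrease is at most `Δ`,
the test succeeds within the stated number of steps. There `‖∇f‖ ≤ ε₂^{3/2} ≤ ε₂`, so the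
approximate-eigenvector condition gives `λ_min ≥ λ - ε₂/2 > -ε₂`.
-/

open scoped RealInnerProductSpace

noncomputable def sgn (t : ℝ) : ℝ := if 0 ≤ t then 1 else -1

lemma sgn_mul_self (t : ℝ) : sgn t * t = |t| := by
  unfold sgn
  split_ifs with h
  · rw [one_mul, abs_of_nonneg h]
  · rw [abs_of_neg (not_le.mp h), neg_one_mul]

lemma abs_sgn (t : ℝ) : |sgn t| = 1 := by
  unfold sgn; split_ifs <;> norm_num

lemma sgn_mul_sgn (t : ℝ) : sgn t * sgn t = 1 := by
  rw [← abs_mul_abs_self, abs_sgn, one_mul]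

lemma image_le_of_hasDerivAt_le_quadratic {φ φ' : ℝ → ℝ} {a b c T : ℝ} (hT : 0 ≤ T)
    (hφ : ∀ t, HasDerivAt φ (φ' t) t) (hle : ∀ t ∈ Set.Ico 0 T, φ' t ≤ a + b * t + c / 2 * t ^ 2) :
    φ T ≤ φ 0 + a * T + b / 2 * T ^ 2 + c / 6 * T ^ 3 := by
  have hB : ∀ t, HasDerivAt (fun t => φ 0 + a * t + b / 2 * t ^ 2 + c / 6 * t ^ 3)
      (a + b * t + c / 2 * t ^ 2) t := fun t =>
    ((((hasDerivAt_id' t).const_mul a).const_add (φ 0)).add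
      ((hasDerivAt_pow 2 t).const_mul (b / 2))).add ((hasDerivAt_pow 3 t).const_mul (c / 6))
      |>.congr_deriv (by push_cast; ring)
  refine image_le_of_deriv_right_le_deriv_boundary
    (fun t _ => (hφ t).continuousAt.continuousWithinAt) (fun t _ => (hφ t).hasDerivWithinAt)
    (by simp) (fun t _ => (hB t).continuousAt.continuousWithinAt)
    (fun t _ => (hB t).hasDerivWithinAt) hle ⟨hT, le_rfl⟩

section Taylor

variable {E : Type*} [NormedAddCommGroup E] [InnerProductSpace ℝ E]

lemma hasDerivAt_comp_add_smul [CompleteSpace E] {f : E → ℝ} {x u : E} {t : ℝ}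
    (hf : DifferentiableAt ℝ f (x + t • u)) :
    HasDerivAt (fun s : ℝ => f (x + s • u)) ⟪gradient f (x + t • u), u⟫ t := by
  have hline : HasDerivAt (fun s : ℝ => x + s • u) u t := by
    simpa using ((hasDerivAt_id t).smul_const u).const_add x
  rw [inner_gradient_left]
  exact hf.hasFDerivAt.comp_hasDerivAt t hline

lemma hasDerivAt_inner_comp_add_smul {F : E → E} {x u : E} {t : ℝ}
    (hF : DifferentiableAt ℝ F (x + t • u)) :
    HasDerivAt (fun s : ℝ => ⟪F (x + s • u), u⟫) ⟪fderiv ℝ F (x + t • u) u, u⟫ t := by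
  have hline : HasDerivAt (fun s : ℝ => x + s • u) u t := by
    simpa using ((hasDerivAt_id t).smul_const u).const_add x
  simpa using (hF.hasFDerivAt.comp_hasDerivAt t hline).inner ℝ (hasDerivAt_const t u)

lemma inner_apply_add_smul_le {F : E → E} {L : ℝ} (hF : ∀ a b, ‖F a - F b‖ ≤ L * ‖a - b‖)
    (x u : E) {t : ℝ} (ht : 0 ≤ t) :
    ⟪F (x + t • u), u⟫ ≤ ⟪F x, u⟫ + L * ‖u‖ ^ 2 * t := by
  have := calc ⟪F (x + t • u) - F x, u⟫
      _ ≤ ‖F (x + t • u) - F x‖ * ‖u‖ := real_inner_le_norm _ _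
      _ ≤ L * ‖x + t • u - x‖ * ‖u‖ := by gcongr; exact hF _ _
      _ = L * ‖u‖ ^ 2 * t := by
        rw [add_sub_cancel_left, norm_smul, Real.norm_of_nonneg ht]; ring
  rw [inner_sub_left] at this
  linarith

lemma inner_apply_apply_add_smul_le {H : E → E →L[ℝ] E} {L : ℝ}
    (hH : ∀ a b, ‖H a - H b‖ ≤ L * ‖a - b‖) (x u : E) {t : ℝ} (ht : 0 ≤ t) :
    ⟪H (x + t • u) u, u⟫ ≤ ⟪H x u, u⟫ + L * ‖u‖ ^ 3 * t := by
  have := calc ⟪(H (x + t • u) - H x) u, u⟫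
      _ ≤ ‖(H (x + t • u) - H x) u‖ * ‖u‖ := real_inner_le_norm _ _
      _ ≤ ‖H (x + t • u) - H x‖ * ‖u‖ * ‖u‖ := by gcongr; exact ContinuousLinearMap.le_opNorm _ _
      _ ≤ L * ‖x + t • u - x‖ * ‖u‖ * ‖u‖ := by gcongr; exact hH _ _
      _ = L * ‖u‖ ^ 3 * t := by
        rw [add_sub_cancel_left, norm_smul, Real.norm_of_nonneg ht]; ring
  rw [sub_apply, inner_sub_left] at this
  linarith

variable [CompleteSpace E] {f : E → ℝ}

theorem ContDiff.differentiable_gradient (hf : ContDiff ℝ 2 f) : Differentiable ℝ (gradient f) :=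
  (InnerProductSpace.toDual ℝ E).symm.toContinuousLinearEquiv.differentiable.comp
    ((hf.fderiv_right (m := 1) (by norm_num)).differentiable one_ne_zero)

theorem le_add_inner_gradient_add_sq (hf : Differentiable ℝ f) {L : ℝ}
    (hglip : ∀ a b, ‖gradient f a - gradient f b‖ ≤ L * ‖a - b‖) (x u : E) :
    f (x + u) ≤ f x + ⟪gradient f x, u⟫ + L / 2 * ‖u‖ ^ 2 := by
  have := image_le_of_hasDerivAt_le_quadratic (a := ⟪gradient f x, u⟫) (b := L * ‖u‖ ^ 2)
    (c := 0) zero_le_one (fun t => hasDerivAt_comp_add_smul (hf (x + t • u)))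
    (fun t ht => by simpa using inner_apply_add_smul_le hglip x u ht.1)
  simp only [zero_smul, one_smul, add_zero, one_pow, mul_one, zero_div] at this
  linarith

theorem le_add_inner_gradient_add_inner_hessian_add_cube (hf : Differentiable ℝ f)
    (hg : Differentiable ℝ (gradient f)) {L : ℝ}
    (hHlip : ∀ a b, ‖fderiv ℝ (gradient f) a - fderiv ℝ (gradient f) b‖ ≤ L * ‖a - b‖)
    (x u : E) :
    f (x + u) ≤ f x + ⟪gradient f x, u⟫ + 1 / 2 * ⟪fderiv ℝ (gradient f) x u, u⟫
      + L / 6 * ‖u‖ ^ 3 := by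
  have hslope : ∀ t, 0 ≤ t → ⟪gradient f (x + t • u), u⟫ ≤
      ⟪gradient f x, u⟫ + ⟪fderiv ℝ (gradient f) x u, u⟫ * t + L * ‖u‖ ^ 3 / 2 * t ^ 2 := by
    intro T hT
    have := image_le_of_hasDerivAt_le_quadratic (a := ⟪fderiv ℝ (gradient f) x u, u⟫)
      (b := L * ‖u‖ ^ 3) (c := 0) hT
      (fun t => hasDerivAt_inner_comp_add_smul (hg (x + t • u)))
      (fun t ht => by simpa using inner_apply_apply_add_smul_le hHlip x u ht.1)
    simp only [zero_smul, add_zero, zero_div, zero_mul] at this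
    linarith
  have := image_le_of_hasDerivAt_le_quadratic (a := ⟪gradient f x, u⟫)
    (b := ⟪fderiv ℝ (gradient f) x u, u⟫) (c := L * ‖u‖ ^ 3) zero_le_one
    (fun t => hasDerivAt_comp_add_smul (hf (x + t • u)))
    (fun t ht => (hslope t ht.1).trans_eq (by ring))
  simp only [zero_smul, one_smul, add_zero, one_pow, mul_one] at this
  linarith

end Taylor

section NCGStep

variable {E : Type*} [NormedAddCommGroup E] [InnerProductSpace ℝ E] [CompleteSpace E]
  {f : E → ℝ} {L1 L2 : ℝ}

theorem le_sub_of_gradient_step (hf : Differentiable ℝ f)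
    (hglip : ∀ a b, ‖gradient f a - gradient f b‖ ≤ L1 * ‖a - b‖) (hL1 : 0 < L1) (x : E) :
    f (x - (1 / L1) • gradient f x) ≤ f x - ‖gradient f x‖ ^ 2 / (2 * L1) := by
  have := le_add_inner_gradient_add_sq hf hglip x (-((1 / L1) • gradient f x))
  rw [← sub_eq_add_neg, inner_neg_right, inner_smul_right, real_inner_self_eq_norm_sq, norm_neg,
    norm_smul, Real.norm_of_nonneg (by positivity)] at this
  have hsum : -(1 / L1 * ‖gradient f x‖ ^ 2) + L1 / 2 * (1 / L1 * ‖gradient f x‖) ^ 2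
      = -(‖gradient f x‖ ^ 2 / (2 * L1)) := by
    field_simp; ring
  linarith

theorem le_sub_of_negative_curvature_step (hf : Differentiable ℝ f)
    (hg : Differentiable ℝ (gradient f))
    (hHlip : ∀ a b, ‖fderiv ℝ (gradient f) a - fderiv ℝ (gradient f) b‖ ≤ L2 * ‖a - b‖)
    (hL2 : 0 < L2) {x v : E} (hv : ‖v‖ = 1) (hneg : ⟪fderiv ℝ (gradient f) x v, v⟫ ≤ 0) :
    f (x - (2 * |⟪fderiv ℝ (gradient f) x v, v⟫| / L2 * sgn ⟪gradient f x, v⟫) • v) ≤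
      f x - 2 * |⟪fderiv ℝ (gradient f) x v, v⟫| ^ 3 / (3 * L2 ^ 2) := by
  set lam := ⟪fderiv ℝ (gradient f) x v, v⟫
  set r := 2 * |lam| / L2
  set σ := sgn ⟪gradient f x, v⟫
  have hlin : ⟪gradient f x, -((r * σ) • v)⟫ = -(r * |⟪gradient f x, v⟫|) := by
    rw [inner_neg_right, real_inner_smul_right, mul_assoc, sgn_mul_self]
  have hquad : ⟪fderiv ℝ (gradient f) x (-((r * σ) • v)), -((r * σ) • v)⟫ = r ^ 2 * lam := by
    rw [map_neg, map_smul, inner_neg_left, inner_neg_right, neg_neg, real_inner_smul_left,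
      real_inner_smul_right]
    linear_combination r ^ 2 * lam * sgn_mul_sgn ⟪gradient f x, v⟫
  have hnorm : ‖-((r * σ) • v)‖ = r := by
    rw [norm_neg, norm_smul, hv, mul_one, Real.norm_eq_abs, abs_mul, abs_sgn, mul_one,
      abs_of_nonneg (by positivity)]
  -- `r = 2|λ|/L₂` minimizes the cubic model `r²λ/2 + L₂r³/6` along `v`.
  have hsum : 1 / 2 * (r ^ 2 * lam) + L2 / 6 * r ^ 3 = -(2 * |lam| ^ 3 / (3 * L2 ^ 2)) := by
    simp only [r, abs_of_nonpos hneg]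
    field_simp
    ring
  have := le_add_inner_gradient_add_inner_hessian_add_cube hf hg hHlip x (-((r * σ) • v))
  rw [← sub_eq_add_neg, hlin, hquad, hnorm] at this
  have : 0 ≤ r * |⟪gradient f x, v⟫| := by positivity
  linarith

noncomputable def ncgStep (f : E → ℝ) (L1 L2 : ℝ) (x v : E) : E :=
  if 2 * |⟪fderiv ℝ (gradient f) x v, v⟫| ^ 3 / (3 * L2 ^ 2) > ‖gradient f x‖ ^ 2 / (2 * L1) then
    x - ((2 * |⟪fderiv ℝ (gradient f) x v, v⟫| / L2) * sgn ⟪gradient f x, v⟫) • v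
  else
    x - (1 / L1) • gradient f x

theorem le_sub_max_of_ncgStep (hf : Differentiable ℝ f) (hg : Differentiable ℝ (gradient f))
    (hglip : ∀ a b, ‖gradient f a - gradient f b‖ ≤ L1 * ‖a - b‖)
    (hHlip : ∀ a b, ‖fderiv ℝ (gradient f) a - fderiv ℝ (gradient f) b‖ ≤ L2 * ‖a - b‖)
    (hL1 : 0 < L1) (hL2 : 0 < L2) {x v : E} (hv : ‖v‖ = 1)
    (hneg : ⟪fderiv ℝ (gradient f) x v, v⟫ ≤ 0) :
    f (ncgStep f L1 L2 x v) ≤ f x - max (2 * |⟪fderiv ℝ (gradient f) x v, v⟫| ^ 3 / (3 * L2 ^ 2))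
      (‖gradient f x‖ ^ 2 / (2 * L1)) := by
  unfold ncgStep
  split_ifs with h
  · rw [max_eq_left h.le]
    exact le_sub_of_negative_curvature_step hf hg hHlip hL2 hv hneg
  · rw [max_eq_right (not_lt.mp h)]
    exact le_sub_of_gradient_step hf hglip hL1 x

end NCGStep

lemma div_max_le_max_of_not_stationary {ε L1 L2 lam g : ℝ} (hε : 0 < ε) (hL1 : 0 < L1)
    (hL2 : 0 < L2) (h : ¬(lam > -ε / 2 ∧ g ≤ ε ^ ((3 : ℝ) / 2))) :
    ε ^ 3 / max (12 * L2 ^ 2) (2 * L1) ≤ max (2 * |lam| ^ 3 / (3 * L2 ^ 2)) (g ^ 2 / (2 * L1)) := by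
  rcases not_and_or.mp h with hlam | hg
  · have : ε / 2 ≤ |lam| := le_abs.mpr (Or.inr (by linarith))
    calc ε ^ 3 / max (12 * L2 ^ 2) (2 * L1)
        ≤ ε ^ 3 / (12 * L2 ^ 2) := by gcongr; exact le_max_left _ _
      _ = 2 * (ε / 2) ^ 3 / (3 * L2 ^ 2) := by ring
      _ ≤ 2 * |lam| ^ 3 / (3 * L2 ^ 2) := by gcongr
      _ ≤ _ := le_max_left _ _
  · have : ε ^ 3 ≤ g ^ 2 :=
      calc ε ^ 3 = (ε ^ ((3 : ℝ) / 2)) ^ 2 := by rw [← Real.rpow_mul_natCast hε.le]; norm_num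
        _ ≤ g ^ 2 := by gcongr; exact (not_le.mp hg).le
    calc ε ^ 3 / max (12 * L2 ^ 2) (2 * L1)
        ≤ ε ^ 3 / (2 * L1) := by gcongr; exact le_max_right _ _
      _ ≤ g ^ 2 / (2 * L1) := by gcongr
      _ ≤ _ := le_max_right _ _

section Descent

variable {a : ℕ → ℝ} {P : ℕ → Prop} {δ : ℝ}

lemma mul_le_sub_of_decrease (hdec : ∀ j, 1 ≤ j → ¬P j → a (j + 1) + δ ≤ a j) (n : ℕ)
    (hn : ∀ i, 1 ≤ i → i ≤ n → ¬P i) : n * δ ≤ a 1 - a (n + 1) := by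
  induction n with
  | zero => simp
  | succ n ih =>
    have := hdec (n + 1) (by omega) (hn (n + 1) (by omega) le_rfl)
    have := ih fun i hi hin => hn i hi (by omega)
    push_cast
    linarith

lemma exists_first_of_decrease {Δ : ℝ} (hδ : 0 < δ) (hbdd : ∀ j, a 1 - a j ≤ Δ)
    (hdec : ∀ j, 1 ≤ j → ¬P j → a (j + 1) + δ ≤ a j) :
    ∃ j, 1 ≤ j ∧ P j ∧ (∀ i, 1 ≤ i → i < j → ¬P i) ∧ ((j : ℝ) - 1) * δ ≤ a 1 - a j := by
  classical
  have hex : ∃ j, 1 ≤ j ∧ P j := by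
    by_contra! hnever
    obtain ⟨n, hn⟩ := exists_nat_gt (Δ / δ)
    have := mul_le_sub_of_decrease hdec n fun i hi _ => hnever i hi
    have := (div_lt_iff₀ hδ).mp hn
    linarith [hbdd (n + 1)]
  have hfirst : ∀ i, 1 ≤ i → i < Nat.find hex → ¬P i := fun i hi hlt hP =>
    Nat.find_min hex hlt ⟨hi, hP⟩
  refine ⟨Nat.find hex, (Nat.find_spec hex).1, (Nat.find_spec hex).2, hfirst, ?_⟩
  obtain ⟨n, hn⟩ : ∃ n, Nat.find hex = n + 1 :=
    ⟨Nat.find hex - 1, by have := (Nat.find_spec hex).1; omega⟩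
  rw [hn]
  push_cast
  simpa using mul_le_sub_of_decrease hdec n fun i hi hin => hfirst i hi (by omega)

end Descent

/-- Corollary on NCG-A1 as a subroutine of NCG-B1: running NCG-A1 with
accuracies `(ε₂^{3/2}, ε₂)` returns a point whose Hessian has smallest eigenvalue `≥ -ε₂`. -/
theorem NCG_A1_subroutine_guarantee {d : ℕ}
    (f : EuclideanSpace ℝ (Fin d) → ℝ) (L1 L2 ε₂ Δ : ℝ)
    (hL1 : 0 < L1) (hL2 : 0 < L2) (hε₂ : 0 < ε₂) (hε₂1 : ε₂ < 1)
    (hf : ContDiff ℝ 2 f)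
    (hglip : ∀ a b : EuclideanSpace ℝ (Fin d),
      ‖gradient f a - gradient f b‖ ≤ L1 * ‖a - b‖)
    (hHlip : ∀ a b : EuclideanSpace ℝ (Fin d),
      ‖fderiv ℝ (gradient f) a - fderiv ℝ (gradient f) b‖ ≤ L2 * ‖a - b‖)
    (x₀ : EuclideanSpace ℝ (Fin d))
    (hΔ : ∀ z : EuclideanSpace ℝ (Fin d), f x₀ - f z ≤ Δ)
    (x v : ℕ → EuclideanSpace ℝ (Fin d))
    (hx1 : x 1 = x₀)
    (hv : ∀ j : ℕ, 1 ≤ j → ‖v j‖ = 1)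
    (hvneg : ∀ j : ℕ, 1 ≤ j → ⟪(fderiv ℝ (gradient f) (x j)) (v j), v j⟫ ≤ 0)
    (hmin : ∀ j : ℕ, 1 ≤ j → ∀ u : EuclideanSpace ℝ (Fin d), ‖u‖ = 1 →
      ⟪(fderiv ℝ (gradient f) (x j)) u, u⟫ ≥
        ⟪(fderiv ℝ (gradient f) (x j)) (v j), v j⟫ -
          max ε₂ ‖gradient f (x j)‖ / 2)
    (hupd : ∀ j : ℕ, 1 ≤ j →
      x (j + 1) =
        if 2 * |⟪(fderiv ℝ (gradient f) (x j)) (v j), v j⟫| ^ 3 / (3 * L2 ^ 2) >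
            ‖gradient f (x j)‖ ^ 2 / (2 * L1) then
          x j - ((2 * |⟪(fderiv ℝ (gradient f) (x j)) (v j), v j⟫| / L2) *
            sgn ⟪gradient f (x j), v j⟫) • v j
        else
          x j - (1 / L1) • gradient f (x j)) :
    ∃ jstar : ℕ, 1 ≤ jstar ∧
      (⟪(fderiv ℝ (gradient f) (x jstar)) (v jstar), v jstar⟫ > -ε₂ / 2 ∧
        ‖gradient f (x jstar)‖ ≤ ε₂ ^ ((3 : ℝ) / 2)) ∧
      (∀ i : ℕ, 1 ≤ i → i < jstar →
        ¬(⟪(fderiv ℝ (gradient f) (x i)) (v i), v i⟫ > -ε₂ / 2 ∧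
          ‖gradient f (x i)‖ ≤ ε₂ ^ ((3 : ℝ) / 2))) ∧
      (jstar : ℝ) ≤
        1 + (max (12 * L2 ^ 2) (2 * L1) / ε₂ ^ 3) * (f (x 1) - f (x jstar)) ∧
      (jstar : ℝ) ≤ 1 + (max (12 * L2 ^ 2) (2 * L1) / ε₂ ^ 3) * Δ ∧
      ∀ u : EuclideanSpace ℝ (Fin d), ‖u‖ = 1 →
        ⟪(fderiv ℝ (gradient f) (x jstar)) u, u⟫ ≥ -ε₂ := by
  set M := max (12 * L2 ^ 2) (2 * L1)
  have hM : 0 < M := lt_max_of_lt_right (by positivity)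
  have hdec : ∀ j, 1 ≤ j →
      ¬(⟪(fderiv ℝ (gradient f) (x j)) (v j), v j⟫ > -ε₂ / 2 ∧
        ‖gradient f (x j)‖ ≤ ε₂ ^ ((3 : ℝ) / 2)) →
      f (x (j + 1)) + ε₂ ^ 3 / M ≤ f (x j) := fun j hj hstop => by
    have hstep : x (j + 1) = ncgStep f L1 L2 (x j) (v j) := hupd j hj
    rw [hstep]
    linarith [le_sub_max_of_ncgStep (hf.differentiable (by norm_num)) hf.differentiable_gradient
      hglip hHlip hL1 hL2 (hv j hj) (hvneg j hj),
      div_max_le_max_of_not_stationary hε₂ hL1 hL2 hstop]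
  have hbdd : ∀ j, f (x 1) - f (x j) ≤ Δ := fun j => hx1 ▸ hΔ (x j)
  obtain ⟨j, hj, hstop, hfirst, hcount⟩ :=
    exists_first_of_decrease (a := fun j => f (x j)) (by positivity) hbdd hdec
  have hbound : (j : ℝ) ≤ 1 + M / ε₂ ^ 3 * (f (x 1) - f (x j)) := by
    calc (j : ℝ) = 1 + M / ε₂ ^ 3 * ((j - 1) * (ε₂ ^ 3 / M)) := by field_simp; ring
      _ ≤ _ := by gcongr
  refine ⟨j, hj, hstop, hfirst, hbound, hbound.trans (by gcongr; exact hbdd j), fun u hu => ?_⟩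
  have hgrad : ‖gradient f (x j)‖ ≤ ε₂ := hstop.2.trans <| by
    simpa using Real.rpow_le_rpow_of_exponent_ge hε₂ hε₂1.le (by norm_num : (1 : ℝ) ≤ 3 / 2)
  have := hmin j hj u hu
  rw [max_eq_left hgrad] at this
  linarith [hstop.1]
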